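/- arXiv:1903.06267 — 2 statements merged into one kernel-verified Lean document; each statement's English description precedes it below -/
import Mathlib

section
/- For every integer n ≥ 2 and every finite field F with q elements, the graph D(n,q) is edge-transitive: for any two edges {u,v} and {u',v'} of D(n,q) there exists a graph automorphism φ of D(n,q) such that {φ(u), φ(v)} = {u', v'}. -/
/-- The `k`-th coordinate (0-based) of a vector in `F^n`, with junk value `0` out of range. -/
def coordOf {n : ℕ} {F : Type*} [Field F] (v : Fin n → F) (k : ℕ) : F :=
  if h : k < n then v ⟨k, h⟩ else 0

/-- Incidence between a point `p` and a line `l` in the graph `D(n,q)`: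
for every 1-based index `m` with `2 ≤ m ≤ n`, the corresponding defining equation holds.
For `m ∈ {2,3,4}` these are `l₂ - p₂ = l₁p₁`, `l₃ - p₃ = l₂p₁`, `l₄ - p₄ = l₁p₂`, and for
`m ≥ 5` the equation is determined by `m mod 4` following the four equations
`l_i - p_i = l₁ p_{i-2}`, `l_{i+1} - p_{i+1} = l_{i-1} p₁`, `l_{i+2} - p_{i+2} = l_i p₁`,
`l_{i+3} - p_{i+3} = l₁ p_{i+1}` for `i ≡ 1 (mod 4)`, `i ≥ 5`. -/
def DInc (n : ℕ) (F : Type*) [Field F] (p l : Fin n → F) : Prop :=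
  ∀ m : ℕ, 2 ≤ m → m ≤ n →
    coordOf l (m - 1) - coordOf p (m - 1) =
      if m = 2 then coordOf l 0 * coordOf p 0
      else if m = 3 then coordOf l 1 * coordOf p 0
      else if m = 4 then coordOf l 0 * coordOf p 1
      else if m % 4 = 1 ∨ m % 4 = 0 then coordOf l 0 * coordOf p (m - 3)
      else coordOf l (m - 3) * coordOf p 0

/-- The bipartite graph `D(n,q)`: vertices are a disjoint union of points (`Sum.inl`)
and lines (`Sum.inr`), both copies of `F^n`, adjacent iff incident. -/
def DGraph (n : ℕ) (F : Type*) [Field F] :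
    SimpleGraph ((Fin n → F) ⊕ (Fin n → F)) where
  Adj x y :=
    match x, y with
    | Sum.inl p, Sum.inr l => DInc n F p l
    | Sum.inr l, Sum.inl p => DInc n F p l
    | _, _ => False
  symm := ⟨by rintro (p | l) (p' | l') h <;> first | exact h | exact h.elim⟩
  loopless := ⟨by rintro (p | l) h <;> exact h⟩

/-!
For every edge `(p, l)` we build an automorphism sending `p` to the zero point and `l` to the
zero line; composing one such automorphism with the inverse of another moves any edge to any
other, in either orientation.

The automorphism is triangular and affine: `l_k ↦ l_k + A_k(l)` and `p_k ↦ p_k + B_k(p)`, with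
`A_k, B_k` affine in the coordinates below `k`. With `j < k` the partner of `k`, equation `k`
reads `l_k - p_k = l_j p_0` or `l_k - p_k = l_0 p_j`. Substituting the new coordinates, the
only term that is not already a function of `l` minus a function of `p` is `A_j(l) p_0`
(resp. `l_0 B_j(p)`). If `A_j` only involves coordinates `t` for which some earlier equation
reads `l_m - p_m = l_t p_0`, that term equals `A_j(0) p_0 + A_j(l ∘ m) - A_j(p ∘ m)`, and
this choice determines `A_k, B_k` up to a common constant, which is fixed so that `p` goes to
`0`. Each equation then holds after the substitution iff it held before, given the earlier
ones; triangularity makes the maps injective, hence bijective since `F` is finite.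
-/

theorem DependsOn.add {ι β : Type*} {α : ι → Type*} [Add β] {f g : (Π i, α i) → β} {s : Set ι}
    (hf : DependsOn f s) (hg : DependsOn g s) : DependsOn (f + g) s :=
  fun _ _ h => congrArg₂ (· + ·) (hf h) (hg h)

theorem DependsOn.const_smul {ι M β : Type*} {α : ι → Type*} [SMul M β] {f : (Π i, α i) → β}
    {s : Set ι} (c : M) (hf : DependsOn f s) : DependsOn (c • f) s :=
  fun _ _ h => congrArg (c • ·) (hf h)

theorem AffineMap.mul_apply_eq_of_dependsOn {ι R : Type*} [CommRing R] {A : (ι → R) →ᵃ[R] R}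
    {s : Set ι} (hA : DependsOn A s) (x : R) {v w w' : ι → R}
    (h : ∀ t ∈ s, x * v t = w t - w' t) : x * A v = x * A 0 + A w - A w' := by
  have hlin (u : ι → R) : A.linear u = A u - A 0 := congrFun A.decomp' u
  have hlin_dep : DependsOn A.linear s := fun u u' hu => by rw [hlin, hlin, hA hu]
  calc x * A v = x * A 0 + A.linear (x • v) := by rw [map_smul, hlin, smul_eq_mul]; ring
  _ = x * A 0 + A.linear (w - w') := by rw [hlin_dep (x := x • v) (y := w - w') h]
  _ = x * A 0 + A w - A w' := by rw [map_sub, hlin, hlin]; ring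

namespace DGraph

/-! Coordinates are 0-based: for `k ≥ 1`, equation `k` of `D(n,q)` reads
`l_k - p_k = l_{partner k} p_0` if `IsLineEqn k`, and `l_k - p_k = l_0 p_{partner k}` otherwise. -/

def partner (k : ℕ) : ℕ := if k = 2 then 1 else k - 2

def IsLineEqn (k : ℕ) : Prop := k % 4 = 1 ∨ k % 4 = 2

instance : DecidablePred IsLineEqn := fun _ => inferInstanceAs (Decidable (_ ∨ _))

def lineIdx (k : ℕ) : ℕ := if IsLineEqn k then partner k else 0

def pointIdx (k : ℕ) : ℕ := if IsLineEqn k then 0 else partner k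

def IncEqn {R : Type*} [CommRing R] (k : ℕ) (l p : ℕ → R) : Prop :=
  l k - p k = l (lineIdx k) * p (pointIdx k)

def IsLineCoord (t : ℕ) : Prop := t % 4 = 3 ∨ t % 4 = 0 ∨ t = 1

def IsPointCoord (t : ℕ) : Prop := t % 4 = 1 ∨ t % 4 = 2 ∨ t = 0

def lineEqn (t : ℕ) : ℕ := if t = 0 then 1 else if t = 1 then 2 else t + 2

def pointEqn (t : ℕ) : ℕ := if t = 0 then 1 else t + 2

theorem partner_lt {k : ℕ} (hk : 1 ≤ k) : partner k < k := by
  unfold partner; split_ifs <;> omega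

theorem lineIdx_le (k : ℕ) : lineIdx k ≤ k := by
  unfold lineIdx partner; split_ifs <;> omega

theorem pointIdx_le (k : ℕ) : pointIdx k ≤ k := by
  unfold pointIdx partner; split_ifs <;> omega

theorem lineEqn_lt {t k : ℕ} (ht : t < partner k) : lineEqn t < k := by
  unfold lineEqn partner at *; split_ifs at * <;> omega

theorem pointEqn_lt {t k : ℕ} (ht : t < partner k) : pointEqn t < k := by
  unfold pointEqn partner at *; split_ifs at * <;> omega

theorem isLineCoord_partner {k : ℕ} (hk : IsLineEqn k) : IsLineCoord (partner k) := by
  unfold IsLineEqn IsLineCoord partner at *; split_ifs <;> omega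

theorem isPointCoord_partner {k : ℕ} (hk : ¬IsLineEqn k) : IsPointCoord (partner k) := by
  unfold IsLineEqn IsPointCoord partner at *; split_ifs <;> omega

theorem isPointCoord_lineEqn {t : ℕ} (ht : IsLineCoord t) : IsPointCoord (lineEqn t) := by
  unfold IsLineCoord IsPointCoord lineEqn at *; split_ifs <;> omega

theorem isLineCoord_pointEqn {t : ℕ} (ht : IsPointCoord t) : IsLineCoord (pointEqn t) := by
  unfold IsLineCoord IsPointCoord pointEqn at *; split_ifs <;> omega

theorem lineIdx_lineEqn {t : ℕ} (ht : IsLineCoord t) :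
    lineIdx (lineEqn t) = t ∧ pointIdx (lineEqn t) = 0 := by
  unfold IsLineCoord lineIdx pointIdx lineEqn partner IsLineEqn at *; split_ifs <;> omega

theorem pointIdx_pointEqn {t : ℕ} (ht : IsPointCoord t) :
    lineIdx (pointEqn t) = 0 ∧ pointIdx (pointEqn t) = t := by
  unfold IsPointCoord lineIdx pointIdx pointEqn partner IsLineEqn at *; split_ifs <;> omega

section Correction

variable {R : Type*} [CommRing R]

theorem incEqn_congr {k : ℕ} {l l' p p' : ℕ → R}
    (hl : ∀ t ≤ k, l t = l' t) (hp : ∀ t ≤ k, p t = p' t) : IncEqn k l p ↔ IncEqn k l' p' := by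
  unfold IncEqn
  rw [hl k le_rfl, hp k le_rfl, hl _ (lineIdx_le k), hp _ (pointIdx_le k)]

variable (R) in
noncomputable def coordMap (j : ℕ) : (ℕ → R) →ᵃ[R] R := (LinearMap.proj j).toAffineMap

noncomputable def reindex (g : ℕ → ℕ) (A : (ℕ → R) →ᵃ[R] R) : (ℕ → R) →ᵃ[R] R :=
  A.comp (LinearMap.funLeft R R g).toAffineMap

@[simp] theorem coordMap_apply (j : ℕ) (v : ℕ → R) : coordMap R j v = v j := rfl

@[simp] theorem reindex_apply (g : ℕ → ℕ) (A : (ℕ → R) →ᵃ[R] R) (v : ℕ → R) :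
    reindex g A v = A (v ∘ g) := rfl

theorem dependsOn_coordMap (j : ℕ) : DependsOn (coordMap R j) {j} := fun _ _ h => h j rfl

theorem dependsOn_reindex {A : (ℕ → R) →ᵃ[R] R} {s : Set ℕ} (hA : DependsOn A s) (g : ℕ → ℕ) :
    DependsOn (reindex g A) (g '' s) :=
  fun _ _ h => hA fun i hi => h (g i) (Set.mem_image_of_mem g hi)

/-- `(A_k, B_k)` from `X = (A_j, B_j)`, `j = partner k`, up to a common constant, where
`a = A_0` and `b = B_0`. -/
noncomputable def correctionStep (a b : R) (k : ℕ)
    (X : ((ℕ → R) →ᵃ[R] R) × ((ℕ → R) →ᵃ[R] R)) : ((ℕ → R) →ᵃ[R] R) × ((ℕ → R) →ᵃ[R] R) :=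
  if IsLineEqn k then
    (b • coordMap R (partner k) + b • X.1 + reindex lineEqn X.1,
     (-X.1 0) • coordMap R 0 + reindex lineEqn X.1)
  else
    (X.2 0 • coordMap R 0 + reindex pointEqn X.2,
     (-a) • coordMap R (partner k) + (-a) • X.2 + reindex pointEqn X.2)

/-- The common constant at coordinate `k > 0` is chosen so that `B_k(P) = -P_k`. -/
noncomputable def correction (a : R) (P : ℕ → R) :
    ℕ → ((ℕ → R) →ᵃ[R] R) × ((ℕ → R) →ᵃ[R] R)
  | 0 => (AffineMap.const R _ a, AffineMap.const R _ (-P 0))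
  | k + 1 =>
    let X := correctionStep a (-P 0) (k + 1) (correction a P (partner (k + 1)))
    let c := -(P (k + 1) + X.2 P)
    (X.1 + AffineMap.const R _ c, X.2 + AffineMap.const R _ c)
decreasing_by exact partner_lt (Nat.le_add_left 1 k)

variable {a : R} {P : ℕ → R}

@[simp] theorem correction_zero :
    correction a P 0 = (AffineMap.const R _ a, AffineMap.const R _ (-P 0)) := by
  rw [correction]

theorem correction_fst_sub_snd {k : ℕ} (hk : 1 ≤ k) (l p : ℕ → R) :
    (correction a P k).1 l - (correction a P k).2 p =
      (correctionStep a (-P 0) k (correction a P (partner k))).1 l -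
        (correctionStep a (-P 0) k (correction a P (partner k))).2 p := by
  obtain ⟨k, rfl⟩ : ∃ j, k = j + 1 := ⟨k - 1, by omega⟩
  rw [correction]
  simp only [AffineMap.coe_add, Pi.add_apply, AffineMap.const_apply]
  ring

theorem correction_snd_apply_self (k : ℕ) : (correction a P k).2 P = -P k := by
  cases k with
  | zero => simp
  | succ k => rw [correction]; simp

/-- The coordinates `A_k` may involve: for a line coordinate `k`, only line coordinates, which is
what allows `A_k(l) p_0` to be split in the step at `lineEqn k`. -/
def lineDeps (k : ℕ) : Set ℕ := {t | t < k ∧ (IsLineCoord k → IsLineCoord t)}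

def pointDeps (k : ℕ) : Set ℕ := {t | t < k ∧ (IsPointCoord k → IsPointCoord t)}

theorem dependsOn_correctionStep {b : R} {k : ℕ} (hk : 1 ≤ k)
    {X : ((ℕ → R) →ᵃ[R] R) × ((ℕ → R) →ᵃ[R] R)}
    (h₁ : DependsOn X.1 (lineDeps (partner k))) (h₂ : DependsOn X.2 (pointDeps (partner k))) :
    DependsOn (correctionStep a b k X).1 (lineDeps k) ∧
      DependsOn (correctionStep a b k X).2 (pointDeps k) := by
  have hj := partner_lt hk
  by_cases hL : IsLineEqn k
  · have hjL := isLineCoord_partner hL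
    simp only [correctionStep, if_pos hL]
    refine ⟨.add (.add (.const_smul b ((dependsOn_coordMap _).mono ?_))
        (.const_smul b (h₁.mono ?_))) ((dependsOn_reindex h₁ _).mono ?_),
      .add (.const_smul _ ((dependsOn_coordMap _).mono ?_)) ((dependsOn_reindex h₁ _).mono ?_)⟩
    · rintro t rfl; exact ⟨hj, fun _ => hjL⟩
    · rintro t ⟨ht, hLt⟩; exact ⟨ht.trans hj, fun _ => hLt hjL⟩
    · rintro _ ⟨t, ⟨ht, -⟩, rfl⟩
      refine ⟨lineEqn_lt ht, fun hkL => ?_⟩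
      unfold IsLineEqn IsLineCoord partner at *; split_ifs at ht <;> omega
    · rintro t rfl; exact ⟨by omega, fun _ => Or.inr (Or.inr rfl)⟩
    · rintro _ ⟨t, ⟨ht, hLt⟩, rfl⟩
      exact ⟨lineEqn_lt ht, fun _ => isPointCoord_lineEqn (hLt hjL)⟩
  · have hjP := isPointCoord_partner hL
    have hkP : ¬IsPointCoord k := by unfold IsLineEqn IsPointCoord at *; omega
    simp only [correctionStep, if_neg hL]
    refine ⟨.add (.const_smul _ ((dependsOn_coordMap _).mono ?_))
        ((dependsOn_reindex h₂ _).mono ?_),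
      .add (.add (.const_smul _ ((dependsOn_coordMap _).mono ?_))
        (.const_smul _ (h₂.mono ?_))) ((dependsOn_reindex h₂ _).mono ?_)⟩
    · rintro t rfl; exact ⟨by omega, fun _ => Or.inr (Or.inl rfl)⟩
    · rintro _ ⟨t, ⟨ht, hPt⟩, rfl⟩
      exact ⟨pointEqn_lt ht, fun _ => isLineCoord_pointEqn (hPt hjP)⟩
    · rintro t rfl; exact ⟨hj, hkP.elim⟩
    · rintro t ⟨ht, -⟩; exact ⟨ht.trans hj, hkP.elim⟩
    · rintro _ ⟨t, ⟨ht, -⟩, rfl⟩; exact ⟨pointEqn_lt ht, hkP.elim⟩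

theorem dependsOn_correction (k : ℕ) :
    DependsOn (correction a P k).1 (lineDeps k) ∧ DependsOn (correction a P k).2 (pointDeps k) := by
  induction k using Nat.strong_induction_on with
  | _ k ih =>
    cases k with
    | zero => exact ⟨fun _ _ _ => by simp, fun _ _ _ => by simp⟩
    | succ k =>
      have hk := Nat.le_add_left 1 k
      obtain ⟨h₁, h₂⟩ := dependsOn_correctionStep (a := a) (b := -P 0) hk
        (ih _ (partner_lt hk)).1 (ih _ (partner_lt hk)).2
      rw [correction]
      exact ⟨.add h₁ fun _ _ _ => rfl, .add h₂ fun _ _ _ => rfl⟩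

noncomputable def lineMap (a : R) (P l : ℕ → R) : ℕ → R := fun t => l t + (correction a P t).1 l

noncomputable def pointMap (a : R) (P p : ℕ → R) : ℕ → R := fun t => p t + (correction a P t).2 p

theorem incEqn_map_iff {l p : ℕ → R} {k : ℕ} (hk : 1 ≤ k)
    (hlower : ∀ j, 1 ≤ j → j < k → IncEqn j l p) :
    IncEqn k (lineMap a P l) (pointMap a P p) ↔ IncEqn k l p := by
  have hdiff := correction_fst_sub_snd (a := a) (P := P) hk l p
  obtain ⟨hA, hB⟩ := dependsOn_correction (a := a) (P := P) (partner k)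
  unfold IncEqn lineMap pointMap
  rw [← sub_eq_zero, ← sub_eq_zero (a := l k - p k)]
  by_cases hL : IsLineEqn k
  · have hjL := isLineCoord_partner hL
    have hsplit := AffineMap.mul_apply_eq_of_dependsOn (s := {t | IsLineCoord t ∧ lineEqn t < k})
      (hA.mono fun t ht => ⟨ht.2 hjL, lineEqn_lt ht.1⟩) (p 0) (v := l) (w := l ∘ lineEqn)
      (w' := p ∘ lineEqn) fun t ⟨hLt, htk⟩ => by
        have := hlower _ (by unfold lineEqn; split_ifs <;> omega) htk
        rw [IncEqn, (lineIdx_lineEqn hLt).1, (lineIdx_lineEqn hLt).2] at this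
        simp only [Function.comp_apply, this]; ring
    simp only [correctionStep, if_pos hL, AffineMap.coe_add, AffineMap.coe_smul, Pi.add_apply,
      Pi.smul_apply, smul_eq_mul, coordMap_apply, reindex_apply] at hdiff
    simp only [lineIdx, pointIdx, if_pos hL, correction_zero, AffineMap.const_apply]
    constructor <;> intro h
    · linear_combination h - hdiff + hsplit
    · linear_combination h + hdiff - hsplit
  · have hjP := isPointCoord_partner hL
    have hsplit := AffineMap.mul_apply_eq_of_dependsOn (s := {t | IsPointCoord t ∧ pointEqn t < k})
      (hB.mono fun t ht => ⟨ht.2 hjP, pointEqn_lt ht.1⟩) (l 0) (v := p) (w := l ∘ pointEqn)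
      (w' := p ∘ pointEqn) fun t ⟨hPt, htk⟩ => by
        have := hlower _ (by unfold pointEqn; split_ifs <;> omega) htk
        rw [IncEqn, (pointIdx_pointEqn hPt).1, (pointIdx_pointEqn hPt).2] at this
        simp only [Function.comp_apply, this]
    simp only [correctionStep, if_neg hL, AffineMap.coe_add, AffineMap.coe_smul, Pi.add_apply,
      Pi.smul_apply, smul_eq_mul, coordMap_apply, reindex_apply] at hdiff
    simp only [lineIdx, pointIdx, if_neg hL, correction_zero, AffineMap.const_apply]
    constructor <;> intro h
    · linear_combination h - hdiff + hsplit
    · linear_combination h + hdiff - hsplit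

theorem forall_incEqn_map_iff {l p : ℕ → R} {N : ℕ} :
    (∀ k, 1 ≤ k → k < N → IncEqn k (lineMap a P l) (pointMap a P p)) ↔
      ∀ k, 1 ≤ k → k < N → IncEqn k l p := by
  constructor
  · intro h k
    induction k using Nat.strong_induction_on with
    | _ k ih =>
      intro hk hkN
      exact (incEqn_map_iff hk fun j hj hjk => ih j hjk hj (hjk.trans hkN)).1 (h k hk hkN)
  · intro h k hk hkN
    exact (incEqn_map_iff hk fun j hj hjk => h j hj (hjk.trans hkN)).2 (h k hk hkN)

end Correction

theorem dInc_rhs_eq {M : Type*} [Mul M] {k : ℕ} (hk : 1 ≤ k) (l p : ℕ → M) :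
    (if k + 1 = 2 then l 0 * p 0
     else if k + 1 = 3 then l 1 * p 0
     else if k + 1 = 4 then l 0 * p 1
     else if (k + 1) % 4 = 1 ∨ (k + 1) % 4 = 0 then l 0 * p (k + 1 - 3)
     else l (k + 1 - 3) * p 0) = l (lineIdx k) * p (pointIdx k) := by
  rcases (by omega : k = 1 ∨ k = 2 ∨ k = 3 ∨ 4 ≤ k) with rfl | rfl | rfl | hk4
  · rfl
  · rfl
  · rfl
  by_cases hL : IsLineEqn k
  · have hk : ¬((k + 1) % 4 = 1 ∨ (k + 1) % 4 = 0) := by unfold IsLineEqn at hL; omega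
    simp only [lineIdx, pointIdx, partner, if_pos hL, hk, if_false]
    rw [if_neg (by omega), if_neg (by omega), if_neg (by omega), if_neg (by omega)]
    congr 2
  · have hk : (k + 1) % 4 = 1 ∨ (k + 1) % 4 = 0 := by unfold IsLineEqn at hL; omega
    simp only [lineIdx, pointIdx, partner, if_neg hL, hk, if_true]
    rw [if_neg (by omega), if_neg (by omega), if_neg (by omega), if_neg (by omega)]
    congr 2

section Finite

variable {n : ℕ} {F : Type*} [Field F]

theorem dInc_iff {p l : Fin n → F} :
    DInc n F p l ↔ ∀ k, 1 ≤ k → k < n → IncEqn k (coordOf l) (coordOf p) := by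
  constructor
  · intro h k hk hkn
    have := h (k + 1) (by omega) hkn
    rwa [dInc_rhs_eq hk, Nat.add_sub_cancel] at this
  · intro h m hm hmn
    obtain ⟨k, rfl⟩ : ∃ k, m = k + 1 := ⟨m - 1, by omega⟩
    rw [dInc_rhs_eq (by omega), Nat.add_sub_cancel]
    exact h k (by omega) hmn

theorem coordOf_of_lt (v : Fin n → F) {t : ℕ} (ht : t < n) : coordOf v t = v ⟨t, ht⟩ :=
  dif_pos ht

theorem injective_add_of_dependsOn_Iio (C : ℕ → (ℕ → F) → F)
    (hC : ∀ t, DependsOn (C t) (Set.Iio t)) :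
    Function.Injective fun (v : Fin n → F) (i : Fin n) => v i + C i (coordOf v) := by
  intro v w hvw
  suffices h : ∀ t, coordOf v t = coordOf w t by
    funext i; simpa [coordOf_of_lt _ i.isLt] using h i
  intro t
  induction t using Nat.strong_induction_on with
  | _ t ih =>
    by_cases ht : t < n
    · have : v ⟨t, ht⟩ + C t (coordOf v) = w ⟨t, ht⟩ + C t (coordOf w) := congrFun hvw ⟨t, ht⟩
      rw [hC t fun s hs => ih s hs] at this
      rw [coordOf_of_lt _ ht, coordOf_of_lt _ ht]
      exact add_right_cancel this
    · simp [coordOf, ht]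

theorem eq_zero_of_dInc_zero {l : Fin n → F} (h : DInc n F 0 l) (h0 : coordOf l 0 = 0) :
    l = 0 := by
  funext ⟨t, ht⟩
  rw [← coordOf_of_lt l ht]
  rcases Nat.eq_zero_or_pos t with rfl | htpos
  · exact h0
  · have hzero (s : ℕ) : coordOf (0 : Fin n → F) s = 0 := by unfold coordOf; split_ifs <;> rfl
    simpa [IncEqn, hzero] using dInc_iff.1 h t htpos ht

def isoOfDIncIff (eP eL : (Fin n → F) ≃ (Fin n → F))
    (h : ∀ p l, DInc n F (eP p) (eL l) ↔ DInc n F p l) : DGraph n F ≃g DGraph n F where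
  toEquiv := Equiv.sumCongr eP eL
  map_rel_iff' := by rintro (p | l) (p' | l') <;> simp [DGraph, h]

theorem exists_iso_inl_inr_eq_zero [Finite F] {p l : Fin n → F} (h : DInc n F p l) :
    ∃ φ : DGraph n F ≃g DGraph n F, φ (Sum.inl p) = Sum.inl 0 ∧ φ (Sum.inr l) = Sum.inr 0 := by
  set a := -coordOf l 0
  set P := coordOf p
  let fL : (Fin n → F) → Fin n → F := fun v i => v i + (correction a P i).1 (coordOf v)
  let fP : (Fin n → F) → Fin n → F := fun v i => v i + (correction a P i).2 (coordOf v)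
  let eL := Equiv.ofBijective fL (injective_add_of_dependsOn_Iio _
    fun t => (dependsOn_correction t).1.mono fun _ h => h.1).bijective_of_finite
  let eP := Equiv.ofBijective fP (injective_add_of_dependsOn_Iio _
    fun t => (dependsOn_correction t).2.mono fun _ h => h.1).bijective_of_finite
  have hinc (p l : Fin n → F) : DInc n F (eP p) (eL l) ↔ DInc n F p l := by
    rw [dInc_iff, dInc_iff, ← forall_incEqn_map_iff (a := a) (P := P) (l := coordOf l)]
    refine forall_congr' fun k => forall_congr' fun _ => forall_congr' fun hkn =>
      incEqn_congr (fun t ht => ?_) (fun t ht => ?_)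
    · simp [eL, fL, lineMap, coordOf_of_lt _ (ht.trans_lt hkn)]
    · simp [eP, fP, pointMap, coordOf_of_lt _ (ht.trans_lt hkn)]
  have hP : eP p = 0 := by
    funext i
    simp [eP, fP, correction_snd_apply_self, P, coordOf_of_lt _ i.isLt]
  have hL : eL l = 0 := by
    refine eq_zero_of_dInc_zero (hP ▸ (hinc p l).2 h) ?_
    unfold coordOf
    split_ifs with hn
    · simp [eL, fL, a, coordOf_of_lt _ hn]
    · rfl
  exact ⟨isoOfDIncIff eP eL hinc, by simp [isoOfDIncIff, hP], by simp [isoOfDIncIff, hL]⟩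

theorem exists_iso_eq_zero_of_adj [Finite F] {u v : (Fin n → F) ⊕ (Fin n → F)}
    (h : (DGraph n F).Adj u v) : ∃ φ : DGraph n F ≃g DGraph n F,
      (φ u = Sum.inl 0 ∧ φ v = Sum.inr 0) ∨ (φ u = Sum.inr 0 ∧ φ v = Sum.inl 0) := by
  rcases u with p | l <;> rcases v with p' | l'
  · exact h.elim
  · obtain ⟨φ, hp, hl⟩ := exists_iso_inl_inr_eq_zero (n := n) h
    exact ⟨φ, .inl ⟨hp, hl⟩⟩
  · obtain ⟨φ, hp, hl⟩ := exists_iso_inl_inr_eq_zero (n := n) h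
    exact ⟨φ, .inr ⟨hl, hp⟩⟩
  · exact h.elim

end Finite

end DGraph

theorem DGraph_edge_transitive_general (n : ℕ) (F : Type*) [Field F] [Fintype F]
    (u v u' v' : (Fin n → F) ⊕ (Fin n → F))
    (h : (DGraph n F).Adj u v) (h' : (DGraph n F).Adj u' v') :
    ∃ φ : DGraph n F ≃g DGraph n F,
      (φ u = u' ∧ φ v = v') ∨ (φ u = v' ∧ φ v = u') := by
  obtain ⟨ψ, hψ⟩ := DGraph.exists_iso_eq_zero_of_adj h
  obtain ⟨ψ', hψ'⟩ := DGraph.exists_iso_eq_zero_of_adj h'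
  refine ⟨ψ.trans ψ'.symm, ?_⟩
  simp only [RelIso.trans_apply, RelIso.symm_apply_eq]
  rcases hψ with ⟨hu, hv⟩ | ⟨hu, hv⟩ <;> rcases hψ' with ⟨hu', hv'⟩ | ⟨hu', hv'⟩ <;>
    simp [hu, hv, hu', hv']

/-- `D(n,q)` is edge-transitive: for any two edges `{u,v}`, `{u',v'}` there is a graph
automorphism `φ` with `{φ u, φ v} = {u', v'}`. -/
theorem DGraph_edge_transitive (n : ℕ) (hn : 2 ≤ n) (F : Type*) [Field F] [Fintype F]
    (u v u' v' : (Fin n → F) ⊕ (Fin n → F))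
    (h : (DGraph n F).Adj u v) (h' : (DGraph n F).Adj u' v') :
    ∃ φ : DGraph n F ≃g DGraph n F,
      (φ u = u' ∧ φ v = v') ∨ (φ u = v' ∧ φ v = u') :=
  DGraph_edge_transitive_general n F u v u' v' h h'
end

section
/- For every integer n ≥ 6 and every finite field F with q elements, the graph D(n,q) is disconnected: there exist two vertices of D(n,q) with no walk between them. -/
def pointInvariant {n : ℕ} {F : Type*} [Field F] (p : Fin n → F) : F :=
  coordOf p 1 ^ 2 - coordOf p 0 * coordOf p 3 + coordOf p 4 - coordOf p 5

def lineInvariant {n : ℕ} {F : Type*} [Field F] (l : Fin n → F) : F :=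
  coordOf l 1 ^ 2 - coordOf l 0 * coordOf l 2 + coordOf l 4 - coordOf l 5

def vertexInvariant {n : ℕ} {F : Type*} [Field F] : (Fin n → F) ⊕ (Fin n → F) → F :=
  Sum.elim pointInvariant lineInvariant

lemma coordOf_of_lt {n : ℕ} {F : Type*} [Field F] (v : Fin n → F) {k : ℕ} (hk : k < n) :
    coordOf v k = v ⟨k, hk⟩ :=
  dif_pos hk

lemma DInc.pointInvariant_eq {n : ℕ} (hn : 6 ≤ n) {F : Type*} [Field F] {p l : Fin n → F}
    (h : DInc n F p l) : pointInvariant p = lineInvariant l := by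
  have e2 := h 2 (by omega) (by omega)
  have e3 := h 3 (by omega) (by omega)
  have e4 := h 4 (by omega) (by omega)
  have e5 := h 5 (by omega) (by omega)
  have e6 := h 6 (by omega) (by omega)
  norm_num at e2 e3 e4 e5 e6
  unfold pointInvariant lineInvariant
  linear_combination (-(coordOf l 1) - coordOf p 1) * e2 + coordOf l 0 * e3 +
    coordOf p 0 * e4 - e5 + e6

lemma DGraph.vertexInvariant_eq_of_adj {n : ℕ} (hn : 6 ≤ n) {F : Type*} [Field F]
    {u v : (Fin n → F) ⊕ (Fin n → F)} (h : (DGraph n F).Adj u v) :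
    vertexInvariant u = vertexInvariant v := by
  rcases u with p | l <;> rcases v with p' | l'
  · exact h.elim
  · exact DInc.pointInvariant_eq hn h
  · exact (DInc.pointInvariant_eq hn h).symm
  · exact h.elim

lemma DGraph.vertexInvariant_eq_of_reachable {n : ℕ} (hn : 6 ≤ n) {F : Type*} [Field F]
    {u v : (Fin n → F) ⊕ (Fin n → F)} (h : (DGraph n F).Reachable u v) :
    vertexInvariant u = vertexInvariant v := by
  obtain ⟨w⟩ := h
  induction w with
  | nil => rfl
  | cons hadj _ ih => exact (vertexInvariant_eq_of_adj hn hadj).trans ih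

lemma pointInvariant_zero {n : ℕ} {F : Type*} [Field F] :
    pointInvariant (0 : Fin n → F) = 0 := by
  simp [pointInvariant, coordOf]

lemma pointInvariant_single_four {n : ℕ} (hn : 6 ≤ n) {F : Type*} [Field F] :
    pointInvariant (Pi.single ⟨4, by omega⟩ 1 : Fin n → F) = 1 := by
  simp (disch := omega) [pointInvariant, coordOf_of_lt, Pi.single_apply, Fin.ext_iff]

theorem DGraph_disconnected_general (n : ℕ) (hn : 6 ≤ n) (F : Type*) [Field F] :
    ∃ u v : (Fin n → F) ⊕ (Fin n → F), ¬ (DGraph n F).Reachable u v := by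
  refine ⟨Sum.inl 0, Sum.inl (Pi.single ⟨4, by omega⟩ 1), fun hreach => ?_⟩
  have hinv := DGraph.vertexInvariant_eq_of_reachable hn hreach
  simp only [vertexInvariant, Sum.elim_inl, pointInvariant_zero,
    pointInvariant_single_four hn] at hinv
  exact zero_ne_one hinv

/-- For `n ≥ 6` the graph `D(n,q)` is disconnected: some two vertices admit no walk
between them. -/
theorem DGraph_disconnected (n : ℕ) (hn : 6 ≤ n) (F : Type*) [Field F] [Fintype F] :
    ∃ u v : (Fin n → F) ⊕ (Fin n → F), ¬ (DGraph n F).Reachable u v :=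
  DGraph_disconnected_general n hn F
end
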